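/- arXiv:0806.3256 — 2 statements merged into one kernel-verified Lean document; each statement's English description precedes it below -/
import Mathlib

section
/- Bases index optimal chambers: let 𝒱 = (V, η, ξ) be a polarized arrangement. For every basis b ∈ 𝔹 there is a unique sign vector α ∈ 𝒫 such that the point H_b lies in Δ_α and ξ(x − H_b) < 0 for every x ∈ Δ_α with x ≠ H_b (i.e., ξ attains its maximum on Δ_α exactly at H_b). Moreover, the resulting map μ : 𝔹 → 𝒫 is a bijection. -/
open Finset

variable {I : Type*} [Fintype I]

/-- The standard dot product on `I → ℝ`. -/
def dot (x y : I → ℝ) : ℝ := ∑ i, x i * y i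

/-- The orthogonal complement of a subspace of `I → ℝ` with respect to the standard
inner product. -/
def perp (V : Submodule ℝ (I → ℝ)) : Submodule ℝ (I → ℝ) where
  carrier := {x | ∀ v ∈ V, dot x v = 0}
  zero_mem' := fun v _ => by simp [dot]
  add_mem' := fun {a b} ha hb v hv => by
    have h : dot (a + b) v = dot a v + dot b v := by
      simp [dot, add_mul, Finset.sum_add_distrib]
    rw [h, ha v hv, hb v hv, add_zero]
  smul_mem' := fun c {a} ha v hv => by
    have h : dot (c • a) v = c * dot a v := by
      simp [dot, Finset.mul_sum, mul_assoc]
    rw [h, ha v hv, mul_zero]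

/-- A sign vector: a function `I → ℝ` all of whose values are `+1` or `-1`. -/
def IsSign (α : I → ℝ) : Prop := ∀ i, α i = 1 ∨ α i = -1

/-- A polarized arrangement `(V, η, ξ)`, where `η ∈ ℝ^I/V` is recorded by an arbitrary
lift `η : I → ℝ` and the covector `ξ ∈ V*` is recorded by an arbitrary vector `ξ : I → ℝ`
with `ξ(v) = ⟨ξ, v⟩` for `v ∈ V`.  Condition (a): every lift of `η` has at least
`|I| - dim V` nonzero coordinates; condition (b): every representative of `ξ` has at
least `dim V` nonzero coordinates. -/
structure PolArr (I : Type*) [Fintype I] where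
  V : Submodule ℝ (I → ℝ)
  η : I → ℝ
  ξ : I → ℝ
  cond_a : ∀ x : I → ℝ, x - η ∈ V →
    Fintype.card I - Module.finrank ℝ V ≤ Set.ncard {i | x i ≠ 0}
  cond_b : ∀ x : I → ℝ, x - ξ ∈ perp V →
    Module.finrank ℝ V ≤ Set.ncard {i | x i ≠ 0}

/-- The chamber `Δ_α ⊆ V_η` determined by a sign vector `α`. -/
def Delta (V : Submodule ℝ (I → ℝ)) (η α : I → ℝ) : Set (I → ℝ) :=
  {x | x - η ∈ V ∧ ∀ i, 0 ≤ α i * x i}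

/-- The cone `Σ_α ⊆ V` determined by a sign vector `α`. -/
def SigCone (V : Submodule ℝ (I → ℝ)) (α : I → ℝ) : Set (I → ℝ) :=
  {x | x ∈ V ∧ ∀ i, 0 ≤ α i * x i}

/-- `α` is feasible if `Δ_α ≠ ∅`. -/
def Feasible (V : Submodule ℝ (I → ℝ)) (η α : I → ℝ) : Prop := (Delta V η α).Nonempty

/-- `α` is bounded if `ξ(Σ_α)` is bounded above. -/
def Bounded (V : Submodule ℝ (I → ℝ)) (ξ α : I → ℝ) : Prop :=
  BddAbove (dot ξ '' SigCone V α)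

/-- The flat `H_S = {x ∈ V_η : x_i = 0 for all i ∈ S}`. -/
def Flat (V : Submodule ℝ (I → ℝ)) (η : I → ℝ) (S : Set I) : Set (I → ℝ) :=
  {x | x - η ∈ V ∧ ∀ i ∈ S, x i = 0}

/-- A basis: a subset `b ⊆ I` with `|b| = dim V` and `H_b ≠ ∅`. -/
def IsBasisSet (V : Submodule ℝ (I → ℝ)) (η : I → ℝ) (b : Finset I) : Prop :=
  b.card = Module.finrank ℝ V ∧ (Flat V η ↑b).Nonempty

/-- `ξ` attains its maximum on `Δ_α` exactly at the point `H_b`. -/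
def OptAt (V : Submodule ℝ (I → ℝ)) (η ξ : I → ℝ) (b : Finset I) (α : I → ℝ) : Prop :=
  ∃ p ∈ Flat V η ↑b, p ∈ Delta V η α ∧ ∀ x ∈ Delta V η α, x ≠ p → dot ξ (x - p) < 0

/-- `α = μ(b)`: the bounded feasible sign vector on whose chamber `ξ` is maximized
exactly at `H_b`. -/
def MuSpec (V : Submodule ℝ (I → ℝ)) (η ξ : I → ℝ) (b : Finset I) (α : I → ℝ) : Prop :=
  Feasible V η α ∧ Bounded V ξ α ∧ OptAt V η ξ b α

/-- The coordinate subspace of vectors vanishing on `S`. -/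
def zeroOn (S : Set I) : Submodule ℝ (I → ℝ) where
  carrier := {x | ∀ i ∈ S, x i = 0}
  zero_mem' := fun i _ => rfl
  add_mem' := fun {a b} ha hb i hi => by simp [Pi.add_apply, ha i hi, hb i hi]
  smul_mem' := fun c {a} ha i hi => by simp [Pi.smul_apply, ha i hi]

set_option linter.unusedSectionVars false

section Aux

variable {V : Submodule ℝ (I → ℝ)} {η ξ α : I → ℝ}

lemma dot_sub_left (x y z : I → ℝ) : dot (x - y) z = dot x z - dot y z := by
  simp [dot, sub_mul, Finset.sum_sub_distrib]

lemma dot_sub_right (x y z : I → ℝ) : dot x (y - z) = dot x y - dot x z := by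
  simp [dot, mul_sub, Finset.sum_sub_distrib]

lemma dot_smul_right (t : ℝ) (x y : I → ℝ) : dot x (t • y) = t * dot x y := by
  simp only [dot, Pi.smul_apply, smul_eq_mul, Finset.mul_sum]
  exact Finset.sum_congr rfl fun i _ => by ring

lemma dot_add_right (x y z : I → ℝ) : dot x (y + z) = dot x y + dot x z := by
  simp [dot, mul_add, Finset.sum_add_distrib]

/-- representatives of ξ agree with ξ on V -/
lemma dot_rep {c : I → ℝ} (hc : c - ξ ∈ perp V) {v : I → ℝ} (hv : v ∈ V) :
    dot c v = dot ξ v := by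
  have := hc v hv
  rw [dot_sub_left] at this
  linarith

lemma IsSign.ne_zero (hα : IsSign α) (i : I) : α i ≠ 0 := by
  rcases hα i with h | h <;> rw [h] <;> norm_num

lemma IsSign.abs (hα : IsSign α) (i : I) : |α i| = 1 := by
  rcases hα i with h | h <;> rw [h] <;> norm_num

lemma IsSign.pos_of_ne (hα : IsSign α) {i : I} {x : ℝ} (h : 0 ≤ α i * x) (hx : x ≠ 0) :
    0 < α i * x := by
  rcases h.lt_or_eq with h' | h'
  · exact h'
  · exact absurd (mul_eq_zero.mp h'.symm) (by push_neg; exact ⟨hα.ne_zero i, hx⟩)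

/-- Key perturbation lemma: if `p` satisfies the sign conditions and `v` satisfies them
on the zero set of `p`, then `p + t • v` satisfies them for some small `t > 0`. -/
lemma exists_pert (hα : IsSign α) {p v : I → ℝ} (hp : ∀ i, 0 ≤ α i * p i)
    (hv : ∀ i, p i = 0 → 0 ≤ α i * v i) :
    ∃ t : ℝ, 0 < t ∧ ∀ i, 0 ≤ α i * (p i + t * v i) := by
  classical
  set g : I → ℝ := fun i => if p i = 0 then 1 else (α i * p i) / (2 * |v i| + 1) with hg
  have hgpos : ∀ i, 0 < g i := by
    intro i
    by_cases h : p i = 0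
    · simp [hg, h]
    · have h1 : 0 < α i * p i := hα.pos_of_ne (hp i) h
      have h2 : 0 < 2 * |v i| + 1 := by positivity
      simp only [hg, if_neg h]
      positivity
  set s : Finset ℝ := insert (1 : ℝ) (Finset.image g Finset.univ) with hs
  have hsne : s.Nonempty := ⟨1, by simp [hs]⟩
  refine ⟨s.min' hsne, ?_, ?_⟩
  · have := s.min'_mem hsne
    simp only [hs, Finset.mem_insert, Finset.mem_image] at this
    rcases this with h | ⟨i, _, h⟩
    · rw [h]; norm_num
    · rw [← h]; exact hgpos i
  · intro i
    set t := s.min' hsne with ht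
    have htpos : 0 < t := by
      have := s.min'_mem hsne
      simp only [hs, Finset.mem_insert, Finset.mem_image] at this
      rcases this with h | ⟨j, _, h⟩
      · rw [ht, h]; norm_num
      · rw [ht, ← h]; exact hgpos j
    by_cases h : p i = 0
    · have := hv i h
      rw [h]
      have : 0 ≤ t * (α i * v i) := mul_nonneg htpos.le this
      nlinarith
    · have h1 : 0 < α i * p i := hα.pos_of_ne (hp i) h
      have hti : t ≤ g i := Finset.min'_le s _ (by simp [hs])
      have hgi : g i = (α i * p i) / (2 * |v i| + 1) := by simp [hg, if_neg h]
      have habs : |α i * v i| = |v i| := by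
        rw [abs_mul, hα.abs, one_mul]
      have h2 : α i * (t * v i) ≥ -(t * |v i|) := by
        have : t * (α i * v i) ≥ -(t * |α i * v i|) := by
          have := neg_abs_le (α i * v i)
          nlinarith
        rw [habs] at this; nlinarith
      have h3 : t * |v i| ≤ g i * |v i| := by
        apply mul_le_mul_of_nonneg_right hti (abs_nonneg _)
      have h4 : g i * |v i| < α i * p i := by
        rw [hgi]
        rw [div_mul_eq_mul_div, div_lt_iff₀ (by positivity)]
        nlinarith [abs_nonneg (v i)]
      nlinarith

end Aux
section Aux2

variable {V : Submodule ℝ (I → ℝ)} {η ξ α : I → ℝ}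

/-- Points of `V_η` have at most `dim V` zero coordinates. -/
lemma zeros_ncard_le (A : PolArr I) {x : I → ℝ} (hx : x - A.η ∈ A.V) :
    {i | x i = 0}.ncard ≤ Module.finrank ℝ A.V := by
  have h1 := A.cond_a x hx
  have h2 : {i | x i ≠ 0}.ncard + {i | x i ≠ 0}ᶜ.ncard = Nat.card I :=
    Set.ncard_add_ncard_compl _
  have hc : {i | x i ≠ 0}ᶜ = {i | x i = 0} := by ext i; simp
  rw [hc, Nat.card_eq_fintype_card] at h2
  omega

/-- If `x ∈ V_η` vanishes on a set `b` of size `dim V`, its zero set is exactly `b`. -/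
lemma zeros_eq_basis (A : PolArr I) {b : Finset I} (hcard : b.card = Module.finrank ℝ A.V)
    {x : I → ℝ} (hx : x - A.η ∈ A.V) (hb : ∀ i ∈ b, x i = 0) :
    ∀ i, x i = 0 → i ∈ b := by
  have hsub : (↑b : Set I) ⊆ {i | x i = 0} := fun i hi => hb i hi
  have h1 : {i | x i = 0}.ncard ≤ (↑b : Set I).ncard := by
    rw [Set.ncard_coe_finset, hcard]; exact zeros_ncard_le A hx
  have heq := Set.eq_of_subset_of_ncard_le hsub h1 (Set.toFinite _)
  intro i hi
  have hmem : i ∈ (↑b : Set I) := by rw [heq]; exact hi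
  exact_mod_cast hmem

/-- There are no nonzero vectors of `V` vanishing on a set of size `dim V` through which
`V_η` passes. -/
lemma basis_ker (A : PolArr I) {b : Finset I} (hb : IsBasisSet A.V A.η b) :
    ∀ w ∈ A.V, (∀ i ∈ b, w i = 0) → w = 0 := by
  classical
  intro w hw hwb
  by_contra hne
  obtain ⟨p, hpV, hpb⟩ := hb.2
  obtain ⟨j, hj⟩ : ∃ j, w j ≠ 0 := by
    by_contra h; push_neg at h; exact hne (funext h)
  have hjb : j ∉ b := fun h => hj (hwb j h)
  set x : I → ℝ := p - (p j / w j) • w with hxdef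
  have hxV : x - A.η ∈ A.V := by
    have : x - A.η = (p - A.η) - (p j / w j) • w := by
      rw [hxdef]; abel
    rw [this]
    exact Submodule.sub_mem _ hpV (Submodule.smul_mem _ _ hw)
  have hxj : x j = 0 := by
    simp only [hxdef, Pi.sub_apply, Pi.smul_apply, smul_eq_mul]
    field_simp
    ring
  have hxb : ∀ i ∈ insert j b, x i = 0 := by
    intro i hi
    rcases Finset.mem_insert.mp hi with h | h
    · rw [h]; exact hxj
    · simp only [hxdef, Pi.sub_apply, Pi.smul_apply, smul_eq_mul, hpb i h, hwb i h,
        mul_zero, sub_zero]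
  -- now x has at least d+1 zeros, contradiction
  have h1 := A.cond_a x hxV
  have hsub : {i | x i ≠ 0} ⊆ (↑(insert j b) : Set I)ᶜ := by
    intro i hi hmem
    exact hi (hxb i (by exact_mod_cast hmem))
  have h2 : {i | x i ≠ 0}.ncard ≤ ((↑(insert j b) : Set I)ᶜ).ncard :=
    Set.ncard_le_ncard hsub (Set.toFinite _)
  have h3 : (↑(insert j b) : Set I).ncard + ((↑(insert j b) : Set I)ᶜ).ncard = Nat.card I :=
    Set.ncard_add_ncard_compl _
  have h4 : (↑(insert j b) : Set I).ncard = b.card + 1 := by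
    rw [Set.ncard_coe_finset, Finset.card_insert_of_notMem hjb]
  have h5 : b.card + 1 ≤ Fintype.card I := by
    rw [← Finset.card_insert_of_notMem hjb]
    exact Finset.card_le_univ _
  rw [Nat.card_eq_fintype_card] at h3
  have hbc := hb.1
  omega

/-- The flat of a basis is a single point. -/
lemma flat_singleton (A : PolArr I) {b : Finset I} (hb : IsBasisSet A.V A.η b)
    {p q : I → ℝ} (hp : p ∈ Flat A.V A.η ↑b) (hq : q ∈ Flat A.V A.η ↑b) : p = q := by
  have hw : p - q ∈ A.V := by
    have : p - q = (p - A.η) - (q - A.η) := by abel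
    rw [this]; exact Submodule.sub_mem _ hp.1 hq.1
  have := basis_ker A hb (p - q) hw (fun i hi => by
    simp [hp.2 i (by exact_mod_cast hi), hq.2 i (by exact_mod_cast hi)])
  have := sub_eq_zero.mp this
  exact this

/-- Restriction of `V` to coordinates in `T`. -/
def resF (V : Submodule ℝ (I → ℝ)) (T : Finset I) : V →ₗ[ℝ] (T → ℝ) where
  toFun v := fun i => v.1 i.1
  map_add' u v := rfl
  map_smul' c v := rfl

/-- The functional `dot ξ` on `V`. -/
def phiF (V : Submodule ℝ (I → ℝ)) (ξ : I → ℝ) : V →ₗ[ℝ] ℝ where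
  toFun v := dot ξ v.1
  map_add' u v := by simp [dot_add_right]
  map_smul' c v := by simp [dot_smul_right]

open scoped Classical in
lemma pi_decomp {T : Finset I} (y : ↥T → ℝ) :
    y = ∑ j : ↥T, y j • (Pi.single j (1 : ℝ) : ↥T → ℝ) := by
  classical
  funext k
  simp [Pi.single_apply, Finset.sum_ite_eq', mul_comm]

/-- If `dot ξ` vanishes on `V ∩ zeroOn T`, then `ξ` has a representative supported on `T`. -/
lemma exists_rep (V : Submodule ℝ (I → ℝ)) (ξ : I → ℝ) (T : Finset I)
    (hker : ∀ w ∈ V, (∀ i ∈ T, w i = 0) → dot ξ w = 0) :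
    ∃ c : I → ℝ, (∀ i, i ∉ T → c i = 0) ∧ c - ξ ∈ perp V := by
  classical
  set f : V →ₗ[ℝ] (T → ℝ) := resF V T with hf
  obtain ⟨g, hg⟩ := LinearMap.exists_rightInverse_of_surjective f.rangeRestrict
    (LinearMap.range_rangeRestrict f)
  set ψ : (LinearMap.range f) →ₗ[ℝ] ℝ := (phiF V ξ).comp g with hψ
  obtain ⟨Ψ, hΨ⟩ := LinearMap.exists_extend ψ
  set c : I → ℝ := fun i => if h : i ∈ T then Ψ (Pi.single (⟨i, h⟩ : ↥T) (1:ℝ)) else 0 with hc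
  have key : ∀ v ∈ V, dot c v = dot ξ v := by
    intro v hv
    set vv : ↥V := ⟨v, hv⟩ with hvv
    -- dot c v = Ψ (f vv)
    have e1 : dot c v = ∑ j : ↥T, c j.1 * v j.1 := by
      have h0 : ∑ i ∈ T, c i * v i = ∑ i : I, c i * v i :=
        Finset.sum_subset (Finset.subset_univ T) (fun i _ hi => by rw [hc]; simp [hi])
      rw [dot, ← h0, ← Finset.sum_coe_sort T (fun i => c i * v i)]
    have e2 : ∀ j : ↥T, c j.1 = Ψ (Pi.single j 1) := by
      intro j
      rw [hc]
      simp only [j.2, dif_pos]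
    have e3 : dot c v = Ψ (f vv) := by
      rw [e1]
      have : f vv = ∑ j : ↥T, (f vv) j • (Pi.single j (1:ℝ) : ↥T → ℝ) := pi_decomp _
      rw [this, map_sum]
      apply Finset.sum_congr rfl
      intro j _
      rw [map_smul, e2 j]
      simp [hf, resF, smul_eq_mul, mul_comm]
      exact Or.inl rfl
    -- Ψ (f vv) = ψ (rangeRestrict vv) = φ (g (rangeRestrict vv)) = φ vv
    have e4 : Ψ (f vv) = ψ (f.rangeRestrict vv) := by
      have := LinearMap.congr_fun hΨ (f.rangeRestrict vv)
      simpa using this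
    have e5 : ψ (f.rangeRestrict vv) = phiF V ξ (g (f.rangeRestrict vv)) := rfl
    have e6 : f.rangeRestrict (g (f.rangeRestrict vv)) = f.rangeRestrict vv := by
      have := LinearMap.congr_fun hg (f.rangeRestrict vv)
      exact this
    have e7 : phiF V ξ (g (f.rangeRestrict vv)) = phiF V ξ vv := by
      set w : ↥V := g (f.rangeRestrict vv) - vv with hw
      have hfw : f w = 0 := by
        have : (f.rangeRestrict w : T → ℝ) = 0 := by
          rw [hw, map_sub, e6]
          simp
        exact this
      have hwz : ∀ i ∈ T, (w : I → ℝ) i = 0 := by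
        intro i hi
        have := congrFun hfw ⟨i, hi⟩
        exact this
      have : dot ξ (w : I → ℝ) = 0 := hker _ w.2 hwz
      have hφw : phiF V ξ w = 0 := this
      rw [hw, map_sub] at hφw
      exact sub_eq_zero.mp hφw
    rw [e3, e4, e5, e7]
    rfl
  refine ⟨c, ?_, ?_⟩
  · intro i hi; rw [hc]; simp [hi]
  · intro v hv
    rw [dot_sub_left, key v hv, sub_self]

end Aux2
section Aux3

/-- Nonvanishing of a basis representative. -/
lemma rep_nonzero (A : PolArr I) {b : Finset I} (hb : IsBasisSet A.V A.η b)
    {c : I → ℝ} (hsupp : ∀ i, i ∉ b → c i = 0) (hperp : c - A.ξ ∈ perp A.V) :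
    ∀ i ∈ b, c i ≠ 0 := by
  classical
  intro i0 hi0 hc0
  have hsub : {i | c i ≠ 0} ⊆ (↑(b.erase i0) : Set I) := by
    intro i hi
    simp only [Finset.coe_erase, Set.mem_diff, Finset.mem_coe, Set.mem_singleton_iff]
    constructor
    · by_contra h; exact hi (hsupp i h)
    · rintro rfl; exact hi hc0
  have h1 : {i | c i ≠ 0}.ncard ≤ (b.erase i0).card := by
    rw [← Set.ncard_coe_finset]
    exact Set.ncard_le_ncard hsub (Set.toFinite _)
  have h2 := A.cond_b c hperp
  rw [Finset.card_erase_of_mem hi0, hb.1] at h1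
  have h3 : 0 < Module.finrank ℝ A.V := by
    rw [← hb.1]
    exact Finset.card_pos.mpr ⟨i0, hi0⟩
  omega

/-- The restriction map to basis coordinates is surjective. -/
lemma resF_surj (A : PolArr I) {b : Finset I} (hb : IsBasisSet A.V A.η b) :
    Function.Surjective (resF A.V b) := by
  have hinj : Function.Injective (resF A.V b) := by
    rw [← LinearMap.ker_eq_bot]
    rw [Submodule.eq_bot_iff]
    rintro ⟨v, hv⟩ hker
    have : ∀ i ∈ b, v i = 0 := fun i hi => congrFun hker ⟨i, hi⟩
    have := basis_ker A hb v hv this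
    simpa using this
  have hrank : Module.finrank ℝ A.V = Module.finrank ℝ (↥b → ℝ) := by
    rw [Module.finrank_pi, Fintype.card_coe, hb.1]
  exact (LinearMap.injective_iff_surjective_of_finrank_eq_finrank hrank).mp hinj

/-- Find an element of `V` with prescribed coordinates on a basis. -/
lemma exists_coord (A : PolArr I) {b : Finset I} (hb : IsBasisSet A.V A.η b)
    (y : ↥b → ℝ) : ∃ v ∈ A.V, (∀ i : ↥b, v i.1 = y i) := by
  obtain ⟨⟨v, hv⟩, hvy⟩ := resF_surj A hb y
  exact ⟨v, hv, fun i => congrFun hvy i⟩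

lemma zeroOn_mono {S T : Set I} (h : S ⊆ T) : zeroOn T ≤ (zeroOn S : Submodule ℝ (I → ℝ)) :=
  fun _ hx i hi => hx i (h hi)

/-- Shrinking lemma: the zero conditions on `Z` can be realized by a small subset `T`. -/
lemma shrink (V : Submodule ℝ (I → ℝ)) (Z : Finset I) :
    ∀ n : ℕ, ∀ S : Finset I, S ⊆ Z →
      Module.finrank ℝ ↥(V ⊓ zeroOn ↑S) ≤ n + Module.finrank ℝ ↥(V ⊓ zeroOn (↑Z : Set I)) →
      ∃ T : Finset I, T ⊆ Z ∧ T.card ≤ S.card + n ∧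
        (V ⊓ zeroOn ↑T : Submodule ℝ (I → ℝ)) ≤ V ⊓ zeroOn (↑Z : Set I) := by
  classical
  intro n
  induction n with
  | zero =>
    intro S hS hrank
    refine ⟨S, hS, by omega, ?_⟩
    have hle : (V ⊓ zeroOn (↑Z : Set I) : Submodule ℝ (I → ℝ)) ≤ V ⊓ zeroOn ↑S :=
      inf_le_inf_left _ (zeroOn_mono (by exact_mod_cast hS))
    have := Submodule.eq_of_le_of_finrank_le hle (by simpa using hrank)
    rw [this]
  | succ n ih =>
    intro S hS hrank
    by_cases hcase : (V ⊓ zeroOn ↑S : Submodule ℝ (I → ℝ)) ≤ V ⊓ zeroOn (↑Z : Set I)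
    · exact ⟨S, hS, by omega, hcase⟩
    · rw [SetLike.not_le_iff_exists] at hcase
      obtain ⟨w, hwS, hwZ⟩ := hcase
      have hwV : w ∈ V := hwS.1
      obtain ⟨i, hiZ, hwi⟩ : ∃ i ∈ Z, w i ≠ 0 := by
        by_contra h
        push_neg at h
        exact hwZ ⟨hwV, fun i hi => h i (by exact_mod_cast hi)⟩
      have hiS : i ∉ S := fun h => hwi (hwS.2 i (by exact_mod_cast h))
      set S' : Finset I := insert i S with hS'
      have hlt : (V ⊓ zeroOn ↑S' : Submodule ℝ (I → ℝ)) < V ⊓ zeroOn ↑S := by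
        apply lt_of_le_of_ne
        · exact inf_le_inf_left _ (zeroOn_mono (by
            intro x hx
            simp only [hS', Finset.coe_insert, Set.mem_insert_iff]
            exact Or.inr hx))
        · intro heq
          have : w ∈ (V ⊓ zeroOn ↑S' : Submodule ℝ (I → ℝ)) := heq ▸ hwS
          exact hwi (this.2 i (by simp [hS']))
      have hrank' : Module.finrank ℝ ↥(V ⊓ zeroOn ↑S') ≤
          n + Module.finrank ℝ ↥(V ⊓ zeroOn (↑Z : Set I)) := by
        have := Submodule.finrank_lt_finrank_of_lt hlt
        omega
      obtain ⟨T, hTZ, hTc, hTle⟩ := ih S' (Finset.insert_subset hiZ hS) hrank'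
      refine ⟨T, hTZ, ?_, hTle⟩
      have : S'.card ≤ S.card + 1 := Finset.card_insert_le _ _
      omega

/-- Core genericity: `dot ξ` cannot vanish on a nontrivial subspace of the form
`V ∩ zeroOn Z`. -/
lemma core_gen (A : PolArr I) (Z : Finset I)
    (hne : ∃ w ∈ A.V, (∀ i ∈ Z, w i = 0) ∧ w ≠ 0)
    (hvan : ∀ w ∈ A.V, (∀ i ∈ Z, w i = 0) → dot A.ξ w = 0) : False := by
  classical
  set d := Module.finrank ℝ A.V with hd
  set u := Module.finrank ℝ ↥(A.V ⊓ zeroOn (↑Z : Set I)) with hu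
  have hu1 : 1 ≤ u := by
    obtain ⟨w, hwV, hwZ, hwne⟩ := hne
    have hwmem : w ∈ (A.V ⊓ zeroOn (↑Z : Set I) : Submodule ℝ (I → ℝ)) :=
      ⟨hwV, fun i hi => hwZ i (by exact_mod_cast hi)⟩
    have : Nontrivial ↥(A.V ⊓ zeroOn (↑Z : Set I)) :=
      ⟨⟨⟨w, hwmem⟩, 0, by simp [hwne]⟩⟩
    rw [hu]
    have := Module.finrank_pos_iff (R := ℝ)
      (M := ↥(A.V ⊓ zeroOn (↑Z : Set I))).mpr this
    omega
  have hud : u ≤ d := by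
    rw [hu, hd]
    exact Submodule.finrank_mono inf_le_left
  have hempty : (A.V ⊓ zeroOn (↑(∅ : Finset I) : Set I) : Submodule ℝ (I → ℝ)) = A.V := by
    apply le_antisymm inf_le_left
    exact le_inf le_rfl (fun x _ i hi => absurd hi (by simp))
  have hrank0 : Module.finrank ℝ ↥(A.V ⊓ zeroOn (↑(∅ : Finset I) : Set I)) ≤ (d - u) + u := by
    rw [hempty, ← hd]
    omega
  obtain ⟨T, hTZ, hTc, hTle⟩ := shrink A.V Z (d - u) ∅ (Finset.empty_subset _) (by
    have : d - u + Module.finrank ℝ ↥(A.V ⊓ zeroOn (↑Z : Set I)) = d - u + u := by rw [← hu]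
    rw [this]
    exact hrank0)
  obtain ⟨c, hcsupp, hcperp⟩ := exists_rep A.V A.ξ T (by
    intro w hwV hwT
    apply hvan w hwV
    intro i hi
    have : w ∈ (A.V ⊓ zeroOn (↑Z : Set I) : Submodule ℝ (I → ℝ)) :=
      hTle ⟨hwV, fun j hj => hwT j (by exact_mod_cast hj)⟩
    exact this.2 i (by exact_mod_cast hi))
  have h1 := A.cond_b c hcperp
  have h2 : {i | c i ≠ 0}.ncard ≤ T.card := by
    rw [← Set.ncard_coe_finset]
    exact Set.ncard_le_ncard (fun i hi => by
      by_contra h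
      exact hi (hcsupp i (by exact_mod_cast h))) (Set.toFinite _)
  simp only [Finset.card_empty] at hTc
  rw [← hd] at h1
  omega

end Aux3
section Aux4

lemma sign_prod_nonpos {a cc ww : ℝ} (ha : a = 1 ∨ a = -1) (h1 : a * cc < 0)
    (h2 : 0 ≤ a * ww) : cc * ww ≤ 0 := by
  rcases ha with rfl | rfl <;> nlinarith

lemma sign_unique {a a' x : ℝ} (ha : a = 1 ∨ a = -1) (ha' : a' = 1 ∨ a' = -1)
    (h1 : 0 ≤ a * x) (h2 : 0 ≤ a' * x) (hx : x ≠ 0) : a = a' := by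
  rcases ha with rfl | rfl <;> rcases ha' with rfl | rfl <;> first
    | rfl
    | (exfalso; apply hx; linarith)

/-- `dot ξ v` computed through a representative supported on `b`. -/
lemma dot_via_rep {V : Submodule ℝ (I → ℝ)} {ξ : I → ℝ} {b : Finset I} {c : I → ℝ}
    (hsupp : ∀ i, i ∉ b → c i = 0) (hperp : c - ξ ∈ perp V) {v : I → ℝ} (hv : v ∈ V) :
    dot ξ v = ∑ j : ↥b, c j.1 * v j.1 := by
  rw [← dot_rep hperp hv]
  have h0 : ∑ i ∈ b, c i * v i = ∑ i : I, c i * v i :=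
    Finset.sum_subset (Finset.subset_univ b) (fun i _ hi => by rw [hsupp i hi, zero_mul])
  rw [dot, ← h0, ← Finset.sum_coe_sort b (fun i => c i * v i)]

/-- Part 1: for every basis `b` there is a unique `α ∈ 𝒫` with `OptAt b α`. -/
lemma part1 (A : PolArr I) {b : Finset I} (hb : IsBasisSet A.V A.η b) :
    ∃! α : I → ℝ, IsSign α ∧ MuSpec A.V A.η A.ξ b α := by
  classical
  obtain ⟨p, hp⟩ := hb.2
  obtain ⟨c, hcsupp, hcperp⟩ := exists_rep A.V A.ξ b (by
    intro w hwV hwb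
    have := basis_ker A hb w hwV hwb
    rw [this]
    simp [dot])
  have hcnz : ∀ i ∈ b, c i ≠ 0 := rep_nonzero A hb hcsupp hcperp
  set α : I → ℝ := fun i => if i ∈ b then (if 0 < c i then -1 else 1)
    else (if 0 < p i then 1 else -1) with hα
  have hsign : IsSign α := by
    intro i
    rw [hα]
    dsimp only
    split_ifs <;> simp
  -- p has zeros exactly on b
  have hpb : ∀ i ∈ b, p i = 0 := fun i hi => hp.2 i (by exact_mod_cast hi)
  have hzb : ∀ i, p i = 0 → i ∈ b := zeros_eq_basis A hb.1 hp.1 hpb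
  have s1 : ∀ i, i ∉ b → p i ≠ 0 := fun i hi h => hi (hzb i h)
  have s2 : ∀ i, 0 ≤ α i * p i := by
    intro i
    by_cases hib : i ∈ b
    · rw [hpb i hib, mul_zero]
    · have hpne := s1 i hib
      rw [hα]
      simp only [hib, if_false]
      split_ifs with h
      · linarith
      · push_neg at h
        have : p i < 0 := lt_of_le_of_ne h hpne
        nlinarith
  have s3 : ∀ i ∈ b, α i * c i < 0 := by
    intro i hib
    have hcne := hcnz i hib
    rw [hα]
    simp only [hib, if_true]
    split_ifs with h
    · linarith
    · push_neg at h
      have : c i < 0 := lt_of_le_of_ne h hcne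
      nlinarith
  have hpΔ : p ∈ Delta A.V A.η α := ⟨hp.1, s2⟩
  -- boundedness
  have hbdd : Bounded A.V A.ξ α := by
    refine ⟨0, ?_⟩
    rintro y ⟨w, hw, rfl⟩
    rw [dot_via_rep hcsupp hcperp hw.1]
    apply Finset.sum_nonpos
    intro j _
    exact sign_prod_nonpos (hsign j.1) (s3 j.1 j.2) (hw.2 j.1)
  -- optimality
  have hopt : OptAt A.V A.η A.ξ b α := by
    refine ⟨p, hp, hpΔ, ?_⟩
    intro x hx hxp
    have hxpV : x - p ∈ A.V := by
      have : x - p = (x - A.η) - (p - A.η) := by abel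
      rw [this]; exact Submodule.sub_mem _ hx.1 hp.1
    rw [dot_via_rep hcsupp hcperp hxpV]
    have hterm : ∀ j : ↥b, c j.1 * (x - p) j.1 = c j.1 * x j.1 := by
      intro j
      simp [hpb j.1 j.2]
    rw [Finset.sum_congr rfl (fun j _ => hterm j)]
    have hle : ∀ j : ↥b, c j.1 * x j.1 ≤ 0 := fun j =>
      sign_prod_nonpos (hsign j.1) (s3 j.1 j.2) (hx.2 j.1)
    rcases lt_or_eq_of_le (Finset.sum_nonpos (fun j _ => hle j)) with h | h
    · exact h
    · exfalso
      have hall := (Finset.sum_eq_zero_iff_of_nonpos (fun j _ => hle j)).mp h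
      have hxb : ∀ i ∈ (↑b : Set I), x i = 0 := by
        intro i hi
        have hib : i ∈ b := by exact_mod_cast hi
        have := hall ⟨i, hib⟩ (Finset.mem_univ _)
        rcases mul_eq_zero.mp this with h' | h'
        · exact absurd h' (hcnz i hib)
        · exact h'
      exact hxp (flat_singleton A hb ⟨hx.1, hxb⟩ hp)
  refine ⟨α, ⟨hsign, ⟨p, hpΔ⟩, hbdd, hopt⟩, ?_⟩
  -- uniqueness
  rintro α' ⟨hsign', _, _, hopt'⟩
  obtain ⟨p', hp', hp'Δ, hstrict'⟩ := hopt'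
  have hpp' : p' = p := flat_singleton A hb hp' hp
  rw [hpp'] at hp'Δ hstrict' hp'
  funext i
  by_cases hib : i ∈ b
  · -- use the strict optimality to pin down the sign on b
    by_contra hne
    have hs3' : 0 < α' i * c i := by
      have h1 := s3 i hib
      rcases hsign i with h | h <;> rcases hsign' i with h' | h' <;>
        first
          | (exfalso; exact hne (h'.trans h.symm))
          | (rw [h'] ; rw [h] at h1; nlinarith)
    obtain ⟨v, hvV, hvy⟩ := exists_coord A hb (Pi.single (⟨i, hib⟩ : ↥b) (α' i))
    have hvi : v i = α' i := by
      have := hvy ⟨i, hib⟩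
      simpa using this
    have hvz : ∀ k ∈ b, k ≠ i → v k = 0 := by
      intro k hk hki
      have := hvy ⟨k, hk⟩
      rwa [Pi.single_apply, if_neg (by simp [Subtype.ext_iff, hki])] at this
    obtain ⟨t, ht, htΔ⟩ := exists_pert (p := p) (v := v) hsign' (fun k => hp'Δ.2 k) (by
      intro k hk
      have hkb : k ∈ b := hzb k hk
      by_cases hki : k = i
      · subst hki
        rw [hvi]
        rcases hsign' k with h | h <;> rw [h] <;> norm_num
      · rw [hvz k hkb hki, mul_zero])
    set x : I → ℝ := p + t • v with hxdef
    have hxΔ : x ∈ Delta A.V A.η α' := by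
      constructor
      · have : x - A.η = (p - A.η) + t • v := by rw [hxdef]; abel
        rw [this]
        exact Submodule.add_mem _ hp'.1 (Submodule.smul_mem _ _ hvV)
      · intro k
        have := htΔ k
        simpa [hxdef, mul_comm] using this
    have hxp : x ≠ p := by
      intro h
      have : x i = p i := by rw [h]
      rw [hxdef] at this
      simp only [Pi.add_apply, Pi.smul_apply, smul_eq_mul, hvi] at this
      rw [hpb i hib] at this
      have : t * α' i = 0 := by linarith
      rcases mul_eq_zero.mp this with h' | h'
      · exact absurd h' (ne_of_gt ht)
      · exact hsign'.ne_zero i h'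
    have hcontra := hstrict' x hxΔ hxp
    have hxpv : x - p = t • v := by rw [hxdef]; abel
    rw [hxpv] at hcontra
    have : dot A.ξ (t • v) = t * (c i * α' i) := by
      rw [dot_smul_right, dot_via_rep hcsupp hcperp hvV]
      congr 1
      rw [Finset.sum_eq_single (⟨i, hib⟩ : ↥b)]
      · rw [hvi]
      · intro j _ hji
        have : j.1 ≠ i := fun h => hji (Subtype.ext h)
        rw [hvz j.1 j.2 this]
        ring
      · intro h
        exact absurd (Finset.mem_univ _) h
    rw [this] at hcontra
    nlinarith [hs3']
  · -- off b the sign is determined by p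
    exact sign_unique (hsign' i) (hsign i) (hp'Δ.2 i) (s2 i) (s1 i hib)

end Aux4
section Aux5

open Filter Topology

lemma dot_continuous (ξ : I → ℝ) : Continuous (dot ξ : (I → ℝ) → ℝ) := by
  unfold dot
  exact continuous_finset_sum _ (fun i _ => (continuous_const.mul (continuous_apply i)))

lemma delta_closed (V : Submodule ℝ (I → ℝ)) (η α : I → ℝ) :
    IsClosed (Delta V η α) := by
  have h1 : Delta V η α = ((fun x => x - η) ⁻¹' (V : Set (I → ℝ))) ∩
      ⋂ i, {x : I → ℝ | 0 ≤ α i * x i} := by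
    ext x
    simp [Delta, Set.mem_iInter]
  rw [h1]
  apply IsClosed.inter
  · exact IsClosed.preimage (continuous_id.sub continuous_const)
      (Submodule.closed_of_finiteDimensional V)
  · exact isClosed_iInter (fun i =>
      isClosed_le continuous_const (continuous_const.mul (continuous_apply i)))

lemma sig_nonpos {V : Submodule ℝ (I → ℝ)} {ξ α : I → ℝ} (hbdd : Bounded V ξ α) :
    ∀ w ∈ SigCone V α, dot ξ w ≤ 0 := by
  intro w hw
  by_contra h
  push_neg at h
  obtain ⟨B, hB⟩ := hbdd
  set t : ℝ := (|B| + 1) / dot ξ w with htd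
  have htpos : 0 < t := div_pos (by positivity) h
  have hmem : t • w ∈ SigCone V α := by
    refine ⟨Submodule.smul_mem _ _ hw.1, fun i => ?_⟩
    have := hw.2 i
    simp only [Pi.smul_apply, smul_eq_mul]
    nlinarith
  have := hB (Set.mem_image_of_mem _ hmem)
  rw [dot_smul_right, htd, div_mul_cancel₀ _ (ne_of_gt h)] at this
  have : |B| + 1 ≤ B := this
  have := le_abs_self B
  linarith

/-- Key genericity consequence: the cone of a bounded sign vector touches `ker ξ`
only at the origin. -/
lemma star (A : PolArr I) {α : I → ℝ} (hsign : IsSign α) (hbdd : Bounded A.V A.ξ α) :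
    ∀ v ∈ SigCone A.V α, dot A.ξ v = 0 → v = 0 := by
  classical
  intro v hv hv0
  by_contra hne
  set Z : Finset I := Finset.univ.filter (fun i => v i = 0) with hZ
  apply core_gen A Z
  · exact ⟨v, hv.1, fun i hi => by simpa [hZ] using hi, hne⟩
  · intro w hwV hwZ
    have hwz : ∀ i, v i = 0 → w i = 0 := fun i hi => hwZ i (by simp [hZ, hi])
    have key : ∀ s : ℝ, v + s • w ∈ SigCone A.V α → s * dot A.ξ w ≤ 0 := by
      intro s hmem
      have h1 := sig_nonpos hbdd _ hmem
      rw [dot_add_right, dot_smul_right, hv0] at h1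
      linarith
    obtain ⟨t1, ht1, hm1⟩ := exists_pert (p := v) (v := w) hsign hv.2
      (fun i hi => by rw [hwz i hi, mul_zero])
    obtain ⟨t2, ht2, hm2⟩ := exists_pert (p := v) (v := -w) hsign hv.2
      (fun i hi => by simp [hwz i hi])
    have k1 := key t1 ⟨Submodule.add_mem _ hv.1 (Submodule.smul_mem _ _ hwV), fun i => by
      simpa using hm1 i⟩
    have k2 := key (-t2) (by
      have : v + (-t2) • w = v + t2 • (-w) := by
        rw [smul_neg, neg_smul]
      rw [this]
      exact ⟨Submodule.add_mem _ hv.1 (Submodule.smul_mem _ _ (Submodule.neg_mem _ hwV)),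
        fun i => by simpa using hm2 i⟩)
    nlinarith

/-- Existence of a maximizer of `ξ` on `Δ_α` for bounded feasible `α`. -/
lemma exists_max (A : PolArr I) {α : I → ℝ} (hsign : IsSign α)
    (hfeas : Feasible A.V A.η α) (hbdd : Bounded A.V A.ξ α) :
    ∃ p ∈ Delta A.V A.η α, ∀ x ∈ Delta A.V A.η α, dot A.ξ x ≤ dot A.ξ p := by
  classical
  obtain ⟨x0, hx0⟩ := hfeas
  set K : Set (I → ℝ) := Delta A.V A.η α ∩ {x | dot A.ξ x0 ≤ dot A.ξ x} with hK
  have hKclosed : IsClosed K :=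
    (delta_closed A.V A.η α).inter (isClosed_le continuous_const (dot_continuous A.ξ))
  have hKne : K.Nonempty := ⟨x0, hx0, (le_rfl : dot A.ξ x0 ≤ dot A.ξ x0)⟩
  have hKbdd : Bornology.IsBounded K := by
    by_contra hub
    rw [isBounded_iff_forall_norm_le] at hub
    push_neg at hub
    have hseq : ∀ n : ℕ, ∃ x ∈ K, (n : ℝ) < ‖x‖ := fun n => hub n
    choose x hxK hxn using hseq
    have hxpos : ∀ n, 0 < ‖x n‖ := fun n =>
      lt_of_le_of_lt (Nat.cast_nonneg n) (hxn n)
    set u : ℕ → (I → ℝ) := fun n => ‖x n‖⁻¹ • x n with hu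
    have husph : ∀ n, u n ∈ Metric.sphere (0 : I → ℝ) 1 := by
      intro n
      simp only [Metric.mem_sphere, dist_zero_right, hu, norm_smul, norm_inv, norm_norm]
      rw [inv_mul_cancel₀ (ne_of_gt (hxpos n))]
    obtain ⟨v, hvsph, φ, hφmono, hφtend⟩ :=
      (isCompact_sphere (0 : I → ℝ) 1).tendsto_subseq husph
    -- the norms along the subsequence tend to infinity
    have hnorm_tend : Tendsto (fun n => ‖x (φ n)‖) atTop atTop := by
      apply tendsto_atTop_mono (fun n => ?_) tendsto_natCast_atTop_atTop
      calc (n : ℝ) ≤ (φ n : ℝ) := by exact_mod_cast hφmono.le_apply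
        _ ≤ ‖x (φ n)‖ := (hxn (φ n)).le
    have hr_tend : Tendsto (fun n => ‖x (φ n)‖⁻¹) atTop (𝓝 0) :=
      tendsto_inv_atTop_zero.comp hnorm_tend
    -- v ∈ V
    have hvV : v ∈ A.V := by
      have hmem : ∀ n, u (φ n) - ‖x (φ n)‖⁻¹ • A.η ∈ A.V := by
        intro n
        have : u (φ n) - ‖x (φ n)‖⁻¹ • A.η = ‖x (φ n)‖⁻¹ • (x (φ n) - A.η) := by
          rw [smul_sub, hu]
        rw [this]
        exact Submodule.smul_mem _ _ (hxK (φ n)).1.1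
      have htend : Tendsto (fun n => u (φ n) - ‖x (φ n)‖⁻¹ • A.η) atTop (𝓝 (v - (0:ℝ) • A.η)) :=
        Tendsto.sub hφtend (hr_tend.smul_const A.η)
      rw [zero_smul, sub_zero] at htend
      exact (Submodule.closed_of_finiteDimensional A.V).mem_of_tendsto htend
        (Filter.Eventually.of_forall hmem)
    -- signs
    have hvsig : ∀ i, 0 ≤ α i * v i := by
      intro i
      have htend : Tendsto (fun n => α i * u (φ n) i) atTop (𝓝 (α i * v i)) :=
        ((continuous_const.mul (continuous_apply i)).tendsto v).comp hφtend
      apply ge_of_tendsto htend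
      apply Filter.Eventually.of_forall
      intro n
      have h1 := (hxK (φ n)).1.2 i
      have h2 := (hxpos (φ n))
      simp only [hu, Pi.smul_apply, smul_eq_mul]
      have : 0 ≤ ‖x (φ n)‖⁻¹ := inv_nonneg.mpr (norm_nonneg _)
      nlinarith
    -- ξ(v) ≥ 0
    have hvxi : 0 ≤ dot A.ξ v := by
      have htend1 : Tendsto (fun n => dot A.ξ (u (φ n))) atTop (𝓝 (dot A.ξ v)) :=
        ((dot_continuous A.ξ).tendsto v).comp hφtend
      have htend2 : Tendsto (fun n => ‖x (φ n)‖⁻¹ * dot A.ξ x0) atTop (𝓝 0) := by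
        simpa using hr_tend.mul_const (dot A.ξ x0)
      apply le_of_tendsto_of_tendsto' htend2 htend1
      intro n
      rw [hu]
      simp only
      rw [dot_smul_right]
      have h1 := (hxK (φ n)).2
      have : 0 ≤ ‖x (φ n)‖⁻¹ := inv_nonneg.mpr (norm_nonneg _)
      exact mul_le_mul_of_nonneg_left h1 this
    -- contradiction with star
    have hv0 : dot A.ξ v = 0 :=
      le_antisymm (sig_nonpos hbdd v ⟨hvV, hvsig⟩) hvxi
    have := star A hsign hbdd v ⟨hvV, hvsig⟩ hv0
    rw [this] at hvsph
    simp at hvsph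
  have hKcomp : IsCompact K := Metric.isCompact_of_isClosed_isBounded hKclosed hKbdd
  obtain ⟨p, hpK, hpmax⟩ := hKcomp.exists_isMaxOn hKne (dot_continuous A.ξ).continuousOn
  refine ⟨p, hpK.1, ?_⟩
  intro y hy
  by_cases h : dot A.ξ x0 ≤ dot A.ξ y
  · exact hpmax ⟨hy, h⟩
  · push_neg at h
    exact le_trans h.le (le_trans hpK.2 (le_refl _))

end Aux5
section Aux6

/-- Part 2: every bounded feasible sign vector arises from a unique basis. -/
lemma part2 (A : PolArr I) {α : I → ℝ} (hsign : IsSign α) (hfeas : Feasible A.V A.η α)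
    (hbdd : Bounded A.V A.ξ α) :
    ∃! b : Finset I, IsBasisSet A.V A.η b ∧ OptAt A.V A.η A.ξ b α := by
  classical
  obtain ⟨p, hpΔ, hpmax⟩ := exists_max A hsign hfeas hbdd
  set Z : Finset I := Finset.univ.filter (fun i => p i = 0) with hZ
  have hZmem : ∀ i, i ∈ Z ↔ p i = 0 := fun i => by simp [hZ]
  have hvan : ∀ w ∈ A.V, (∀ i ∈ Z, w i = 0) → dot A.ξ w = 0 := by
    intro w hwV hwZ
    have hwz : ∀ i, p i = 0 → w i = 0 := fun i hi => hwZ i ((hZmem i).mpr hi)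
    have key : ∀ s : ℝ, p + s • w ∈ Delta A.V A.η α → s * dot A.ξ w ≤ 0 := by
      intro s hmem
      have h1 := hpmax _ hmem
      rw [dot_add_right, dot_smul_right] at h1
      linarith
    obtain ⟨t1, ht1, hm1⟩ := exists_pert (p := p) (v := w) hsign hpΔ.2
      (fun i hi => by rw [hwz i hi, mul_zero])
    obtain ⟨t2, ht2, hm2⟩ := exists_pert (p := p) (v := -w) hsign hpΔ.2
      (fun i hi => by simp [hwz i hi])
    have hd1 : p + t1 • w ∈ Delta A.V A.η α := by
      refine ⟨?_, fun i => by simpa using hm1 i⟩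
      have h2 : p + t1 • w - A.η = (p - A.η) + t1 • w := by abel
      rw [h2]
      exact Submodule.add_mem _ hpΔ.1 (Submodule.smul_mem _ _ hwV)
    have hd2 : p + (-t2) • w ∈ Delta A.V A.η α := by
      refine ⟨?_, fun i => ?_⟩
      · have h2 : p + (-t2) • w - A.η = (p - A.η) + (-t2) • w := by abel
        rw [h2]
        exact Submodule.add_mem _ hpΔ.1 (Submodule.smul_mem _ _ hwV)
      · have := hm2 i
        simp only [Pi.neg_apply, Pi.add_apply, Pi.smul_apply, smul_eq_mul] at this ⊢
        have he : p i + -t2 * w i = p i + t2 * -(w i) := by ring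
        rw [he]
        exact this
    have k1 := key t1 hd1
    have k2 := key (-t2) hd2
    nlinarith
  have hker : ∀ w ∈ A.V, (∀ i ∈ Z, w i = 0) → w = 0 := by
    intro w hwV hwZ
    by_contra hne
    exact core_gen A Z ⟨w, hwV, hwZ, hne⟩ hvan
  have hpF : p ∈ Flat A.V A.η ↑Z := ⟨hpΔ.1, fun i hi => (hZmem i).mp (by exact_mod_cast hi)⟩
  have hZcard : Z.card = Module.finrank ℝ A.V := by
    apply le_antisymm
    · -- zeros of p at most d
      have h1 : (↑Z : Set I).ncard ≤ Module.finrank ℝ A.V := by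
        have hss : (↑Z : Set I) ⊆ {i | p i = 0} := fun i hi => (hZmem i).mp (by exact_mod_cast hi)
        exact le_trans (Set.ncard_le_ncard hss (Set.toFinite _)) (zeros_ncard_le A hpΔ.1)
      rwa [Set.ncard_coe_finset] at h1
    · -- injectivity of restriction to Z
      have hinj : Function.Injective (resF A.V Z) := by
        rw [← LinearMap.ker_eq_bot, Submodule.eq_bot_iff]
        rintro ⟨w, hw⟩ hkw
        have : ∀ i ∈ Z, w i = 0 := fun i hi => congrFun hkw ⟨i, hi⟩
        have := hker w hw this
        simpa using this
      have := LinearMap.finrank_le_finrank_of_injective hinj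
      rwa [Module.finrank_pi, Fintype.card_coe] at this
  have hbas : IsBasisSet A.V A.η Z := ⟨hZcard, ⟨p, hpF⟩⟩
  obtain ⟨c, hcsupp, hcperp⟩ := exists_rep A.V A.ξ Z (fun w hw hwZ => by
    rw [hker w hw hwZ]; simp [dot])
  have hcnz := rep_nonzero A hbas hcsupp hcperp
  have hpb : ∀ i ∈ Z, p i = 0 := fun i hi => (hZmem i).mp hi
  have hs3 : ∀ i ∈ Z, α i * c i < 0 := by
    intro i hiZ
    have hne0 : α i * c i ≠ 0 := mul_ne_zero (hsign.ne_zero i) (hcnz i hiZ)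
    rcases lt_or_gt_of_ne hne0 with h | h
    · exact h
    · exfalso
      obtain ⟨v, hvV, hvy⟩ := exists_coord A hbas (Pi.single (⟨i, hiZ⟩ : ↥Z) (α i))
      have hvi : v i = α i := by simpa using hvy ⟨i, hiZ⟩
      have hvz : ∀ k ∈ Z, k ≠ i → v k = 0 := by
        intro k hk hki
        have := hvy ⟨k, hk⟩
        rwa [Pi.single_apply, if_neg (by simp [Subtype.ext_iff, hki])] at this
      obtain ⟨t, ht, htΔ⟩ := exists_pert (p := p) (v := v) hsign hpΔ.2 (by
        intro k hk
        have hkZ : k ∈ Z := (hZmem k).mpr hk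
        by_cases hki : k = i
        · subst hki
          rw [hvi]
          rcases hsign k with h' | h' <;> rw [h'] <;> norm_num
        · rw [hvz k hkZ hki, mul_zero])
      have hxΔ : p + t • v ∈ Delta A.V A.η α := by
        refine ⟨?_, fun k => by simpa using htΔ k⟩
        have h2 : p + t • v - A.η = (p - A.η) + t • v := by abel
        rw [h2]
        exact Submodule.add_mem _ hpΔ.1 (Submodule.smul_mem _ _ hvV)
      have hmax := hpmax _ hxΔ
      rw [dot_add_right, dot_smul_right] at hmax
      have hdv : dot A.ξ v = c i * α i := by
        rw [dot_via_rep hcsupp hcperp hvV]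
        rw [Finset.sum_eq_single (⟨i, hiZ⟩ : ↥Z)]
        · rw [hvi]
        · intro j _ hji
          have : j.1 ≠ i := fun h' => hji (Subtype.ext h')
          rw [hvz j.1 j.2 this]
          ring
        · intro h'
          exact absurd (Finset.mem_univ _) h'
      rw [hdv] at hmax
      nlinarith
  have hstrict : ∀ x ∈ Delta A.V A.η α, x ≠ p → dot A.ξ (x - p) < 0 := by
    intro x hx hxp
    have hxpV : x - p ∈ A.V := by
      have h2 : x - p = (x - A.η) - (p - A.η) := by abel
      rw [h2]
      exact Submodule.sub_mem _ hx.1 hpΔ.1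
    rw [dot_via_rep hcsupp hcperp hxpV]
    have hterm : ∀ j : ↥Z, c j.1 * (x - p) j.1 = c j.1 * x j.1 := by
      intro j
      simp [hpb j.1 j.2]
    rw [Finset.sum_congr rfl (fun j _ => hterm j)]
    have hle : ∀ j : ↥Z, c j.1 * x j.1 ≤ 0 := fun j =>
      sign_prod_nonpos (hsign j.1) (hs3 j.1 j.2) (hx.2 j.1)
    rcases lt_or_eq_of_le (Finset.sum_nonpos (fun j _ => hle j)) with h | h
    · exact h
    · exfalso
      have hall := (Finset.sum_eq_zero_iff_of_nonpos (fun j _ => hle j)).mp h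
      have hxb : ∀ i ∈ (↑Z : Set I), x i = 0 := by
        intro i hi
        have hiZ : i ∈ Z := by exact_mod_cast hi
        have := hall ⟨i, hiZ⟩ (Finset.mem_univ _)
        rcases mul_eq_zero.mp this with h' | h'
        · exact absurd h' (hcnz i hiZ)
        · exact h'
      exact hxp (flat_singleton A hbas ⟨hx.1, hxb⟩ hpF)
  refine ⟨Z, ⟨hbas, ⟨p, hpF, hpΔ, hstrict⟩⟩, ?_⟩
  rintro b' ⟨hb', q, hqF, hqΔ, hqstrict⟩
  have hqp : q = p := by
    by_contra hne
    have h1 := hqstrict p hpΔ (fun h => hne h.symm)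
    have h2 : dot A.ξ (q - p) < 0 := hstrict q hqΔ hne
    have h3 : dot A.ξ (p - q) + dot A.ξ (q - p) = 0 := by
      rw [← dot_add_right]
      have : (p - q) + (q - p) = 0 := by abel
      rw [this]
      simp [dot]
    linarith
  subst hqp
  have hsub : b' ⊆ Z := fun i hi => (hZmem i).mpr (hqF.2 i (by exact_mod_cast hi))
  apply Finset.eq_of_subset_of_card_le hsub
  rw [hZcard, hb'.1]

end Aux6
/-- **Bases index optimal chambers.**  For every basis `b ∈ 𝔹` there is a unique bounded
feasible sign vector `α` such that `ξ` attains its maximum on `Δ_α` exactly at the point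
`H_b`; moreover the resulting map `μ : 𝔹 → 𝒫` is a bijection, i.e. every bounded
feasible sign vector arises this way from a unique basis. -/
theorem mu_bijection (A : PolArr I) :
    (∀ b : Finset I, IsBasisSet A.V A.η b →
      ∃! α : I → ℝ, IsSign α ∧ MuSpec A.V A.η A.ξ b α) ∧
    (∀ α : I → ℝ, IsSign α → Feasible A.V A.η α → Bounded A.V A.ξ α →
      ∃! b : Finset I, IsBasisSet A.V A.η b ∧ OptAt A.V A.η A.ξ b α) :=
  ⟨fun _ hb => part1 A hb, fun _ hs hf hbo => part2 A hs hf hbo⟩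
end

section
/- Let 𝒱 be a polarized arrangement and b ∈ 𝔹 a basis. Then ℬ_b ⊆ ℬ: every sign vector α ∈ {+1,−1}^I with α(i) = μ(b)(i) for all i ∈ b is bounded, i.e. ξ(Σ_α) is bounded above. -/
open Finset

variable {I : Type*} [Fintype I]

lemma dot_smul_right' (ξ v : I → ℝ) (c : ℝ) : dot ξ (c • v) = c * dot ξ v := by
  simp [dot, Finset.mul_sum, mul_comm, mul_left_comm]

/-- `ℬ_b ⊆ ℬ`: every sign vector agreeing with `μ(b)` in all coordinates of the basis
`b` is bounded. -/
theorem cone_subset_bounded (A : PolArr I) (b : Finset I) (hb : IsBasisSet A.V A.η b)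
    (β : I → ℝ) (hβs : IsSign β) (hμb : MuSpec A.V A.η A.ξ b β)
    (α : I → ℝ) (hαs : IsSign α) (hagree : ∀ i ∈ b, α i = β i) :
    Bounded A.V A.ξ α := by
  classical
  obtain ⟨hcard, -⟩ := hb
  obtain ⟨-, -, p, hpflat, hpDelta, hopt⟩ := hμb
  have hpzero : ∀ i ∈ b, p i = 0 := hpflat.2
  -- p is nonzero off b
  have hpne : ∀ i, i ∉ b → p i ≠ 0 := by
    intro j hj hpj
    have hjc : j ∈ bᶜ := Finset.mem_compl.2 hj
    have hsub : {i | p i ≠ 0} ⊆ ↑((bᶜ).erase j) := by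
      intro i hi
      simp only [Finset.coe_erase, Set.mem_diff, Finset.coe_compl, Set.mem_compl_iff,
        Finset.mem_coe, Set.mem_singleton_iff]
      refine ⟨fun hib => hi (hpzero i hib), ?_⟩
      rintro rfl; exact hi hpj
    have h1 := A.cond_a p hpflat.1
    have h2 : Set.ncard {i | p i ≠ 0} ≤ ((bᶜ).erase j).card := by
      have h := Set.ncard_le_ncard hsub ((bᶜ).erase j).finite_toSet
      rwa [Set.ncard_coe_finset] at h
    have h4 : (bᶜ).card = Fintype.card I - b.card := Finset.card_compl b
    have h5 : ((bᶜ).erase j).card = (bᶜ).card - 1 := Finset.card_erase_of_mem hjc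
    have h6 : 0 < (bᶜ).card := Finset.card_pos.2 ⟨j, hjc⟩
    have h7 : b.card ≤ Fintype.card I := b.card_le_univ
    omega
  -- key claim
  have key : ∀ v ∈ A.V, (∀ i ∈ b, 0 ≤ β i * v i) → dot A.ξ v ≤ 0 := by
    intro v hv hvb
    set f : I → ℝ := fun i => if β i * v i < 0 then (β i * p i) / (-(β i * v i)) else 1
      with hf
    set s : Finset ℝ := insert 1 (Finset.univ.image f) with hs
    have hsne : s.Nonempty := ⟨1, Finset.mem_insert_self _ _⟩
    set t := s.min' hsne with ht
    have htpos : 0 < t := by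
      rw [ht, Finset.lt_min'_iff]
      intro y hy
      rcases Finset.mem_insert.1 hy with rfl | hy
      · exact one_pos
      · obtain ⟨i, -, rfl⟩ := Finset.mem_image.1 hy
        by_cases hneg : β i * v i < 0
        · have hib : i ∉ b := fun h => absurd (hvb i h) (not_le.2 hneg)
          have hpp : 0 < β i * p i := by
            rcases (hpDelta.2 i).lt_or_eq with h | h
            · exact h
            · exfalso
              have hβne : β i ≠ 0 := by rcases hβs i with h' | h' <;> rw [h'] <;> norm_num
              have : p i = 0 := by
                rcases mul_eq_zero.1 h.symm with h' | h'
                · exact absurd h' hβne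
                · exact h'
              exact hpne i hib this
          simp only [hf, if_pos hneg]
          exact div_pos hpp (by linarith)
        · simp [hf, hneg]
    have hcoord : ∀ i, 0 ≤ β i * (p i + t * v i) := by
      intro i
      have htf : t ≤ f i := Finset.min'_le s _
        (Finset.mem_insert_of_mem (Finset.mem_image_of_mem f (Finset.mem_univ i)))
      have hring : β i * (p i + t * v i) = β i * p i + t * (β i * v i) := by ring
      by_cases hneg : β i * v i < 0
      · have hfi : f i = (β i * p i) / (-(β i * v i)) := if_pos hneg
        rw [hfi] at htf
        have h1 : t * (-(β i * v i)) ≤ β i * p i :=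
          (le_div_iff₀ (by linarith)).1 htf
        nlinarith
      · push_neg at hneg
        have h2 : 0 ≤ t * (β i * v i) := mul_nonneg htpos.le hneg
        have h3 := hpDelta.2 i
        linarith [hring]
    have hxD : (fun i => p i + t * v i) ∈ Delta A.V A.η β := by
      refine ⟨?_, hcoord⟩
      have heq : (fun i => p i + t * v i) - A.η = (p - A.η) + t • v := by
        funext i; simp [Pi.sub_apply]; ring
      rw [heq]
      exact A.V.add_mem hpflat.1 (A.V.smul_mem t hv)
    by_cases hvz : (fun i => p i + t * v i) = p
    · have hv0 : v = 0 := by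
        funext i
        have := congrFun hvz i
        have : t * v i = 0 := by simpa using this
        rcases mul_eq_zero.1 this with h | h
        · exact absurd h htpos.ne'
        · simpa using h
      simp [hv0, dot]
    · have hlt := hopt _ hxD hvz
      have hsub : (fun i => p i + t * v i) - p = t • v := by
        funext i; simp only [Pi.sub_apply, Pi.smul_apply, smul_eq_mul]; ring
      rw [hsub, dot_smul_right'] at hlt
      nlinarith
  refine ⟨0, ?_⟩
  rintro y ⟨x, ⟨hxV, hxs⟩, rfl⟩
  refine key x hxV fun i hi => ?_
  rw [← hagree i hi]
  exact hxs i
end
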